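/- There exists an absolute constant C > 0 such that for any irrational α with convergent denominators q_k, and any k ≥ 2, ∑_{0<|q|<q_k} 1/‖qα‖ ≤ C·q_k·log(q_k + 1). -/

import Mathlib

/-!
For `0 < |m| < q_{n+1}` write `(m, p)` in the unimodular basis `(q_n, p_n), (q_{n+1}, p_{n+1})`.
The two coefficients have opposite signs, and so do the errors `q_n α - p_n` and
`q_{n+1} α - p_{n+1}`, hence `|m α - p| ≥ |q_n α - p_n| ≥ 1 / (q_n + q_{n+1}) ≥ 1 / (2 q_{n+1})`.
So for `i` ranging over `(0, q_{n+1})`, or over `(-q_{n+1}, 0)`, the numbers `i α - round (i α)`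
are pairwise `δ`-apart and of absolute value at least `δ = 1 / (2 q_{n+1})`. Among those of a
fixed sign, `⌊‖i α‖ / δ⌋` takes each value `1, …, q_{n+1}` at most once, which bounds the sum by
`8 q_{n+1} H_{q_{n+1}}`.
-/

/-- Distance from a real number to the nearest integer. -/
noncomputable def nint (x : ℝ) : ℝ := |x - round x|

open Finset

section

variable {K : Type*} [Field K] [LinearOrder K] [IsStrictOrderedRing K]

theorem mul_nonpos_of_abs_sub_eq_one {A B : K} (hA : |A| < 1) (hB : |B| ≤ 1) (h : |A - B| = 1) :
    A * B ≤ 0 := by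
  by_contra! hAB
  rw [abs_lt] at hA
  rw [abs_le] at hB
  refine h.not_lt (abs_sub_lt_iff.2 ?_)
  rcases mul_pos_iff.1 hAB with ⟨hA0, hB0⟩ | ⟨hA0, hB0⟩ <;> constructor <;> linarith

theorem abs_le_abs_mul_sub_of_isUnit {a b c d m p : ℤ} (x : K)
    (hdet : IsUnit (a * d - b * c)) (hb : 0 ≤ b) (hm : m ≠ 0) (hmd : |m| < d)
    (hsign : (b * x - a) * (d * x - c) ≤ 0) : |b * x - a| ≤ |m * x - p| := by
  set D := a * d - b * c
  have hD : D * D = 1 := by rcases Int.isUnit_iff.1 hdet with h | h <;> rw [h] <;> rfl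
  set u := D * (d * p - c * m)
  set w := D * (a * m - b * p)
  have hm' : m = u * b + w * d := by linear_combination (-m) * hD
  have hp' : p = u * a + w * c := by linear_combination (-p) * hD
  have hu : u ≠ 0 := by
    intro hu0
    rw [hu0, zero_mul, zero_add] at hm'
    rw [abs_lt] at hmd
    rcases lt_trichotomy w 0 with hw | hw | hw
    · nlinarith
    · exact hm (by simpa [hw] using hm')
    · nlinarith
  have huw : u * w ≤ 0 := by
    by_contra! huw
    rw [abs_lt] at hmd
    rcases mul_pos_iff.1 huw with ⟨hu, hw⟩ | ⟨hu, hw⟩ <;> nlinarith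
  have hdecomp : (m : K) * x - p = u * (b * x - a) + w * (d * x - c) := by
    rw [hm', hp']; push_cast; ring
  have hu1 : (1 : K) ≤ |(u : K)| := by exact_mod_cast Int.one_le_abs hu
  calc |(b : K) * x - a| ≤ |(u : K)| * |b * x - a| :=
        le_mul_of_one_le_left (abs_nonneg _) hu1
    _ = |u * (b * x - a)| := (abs_mul _ _).symm
    _ ≤ |u * (b * x - a) + w * (d * x - c)| := by
        rw [← sq_le_sq]
        have huw' : (u : K) * w ≤ 0 := by exact_mod_cast huw
        have hsame : (0 : K) ≤ (u * (b * x - a)) * (w * (d * x - c)) := by nlinarith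
        nlinarith [sq_nonneg ((w : K) * (d * x - c))]
    _ = |m * x - p| := by rw [hdecomp]

end

namespace GenContFract

open GenContFract (of)

variable {K : Type*} [Field K] [LinearOrder K] [FloorRing K]

theorem exists_int_eq_contsAux (v : K) : ∀ n, ∃ a b : ℤ, (of v).contsAux n = ⟨a, b⟩
  | 0 => ⟨1, 0, by simp [zeroth_contAux_eq_one_zero]⟩
  | 1 => ⟨⌊v⌋, 1, by simp [first_contAux_eq_h_one, of_h_eq_floor]⟩
  | n + 2 => by
    obtain ⟨a₀, b₀, h₀⟩ := exists_int_eq_contsAux v n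
    obtain ⟨a₁, b₁, h₁⟩ := exists_int_eq_contsAux v (n + 1)
    cases hs : (of v).s.get? n with
    | none => rw [contsAux_stable_step_of_terminated hs]; exact ⟨a₁, b₁, h₁⟩
    | some gp =>
      obtain ⟨ha, z, hz⟩ := of_partNum_eq_one_and_exists_int_partDen_eq hs
      refine ⟨z * a₁ + a₀, z * b₁ + b₀, ?_⟩
      rw [contsAux_recurrence hs h₀ h₁, ha, hz]
      push_cast
      ring_nf

theorem exists_int_eq_nums_dens (v : K) (n : ℕ) :
    ∃ a b : ℤ, (of v).nums n = a ∧ (of v).dens n = b := by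
  obtain ⟨a, b, h⟩ := exists_int_eq_contsAux v (n + 1)
  exact ⟨a, b, by simp [num_eq_conts_a, nth_cont_eq_succ_nth_contAux, h],
    by simp [den_eq_conts_b, nth_cont_eq_succ_nth_contAux, h]⟩

theorem of_determinant {v : K} {n : ℕ} (h : ¬(of v).TerminatedAt n) :
    (of v).nums n * (of v).dens (n + 1) - (of v).dens n * (of v).nums (n + 1) = (-1) ^ (n + 1) :=
  SimpContFract.determinant (s := SimpContFract.of v) h

def approxErr (v : K) (n : ℕ) : K := (of v).dens n * v - (of v).nums n

variable [IsStrictOrderedRing K]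

theorem one_le_dens (v : K) (n : ℕ) : 1 ≤ (of v).dens n :=
  zeroth_den_eq_one (g := of v) ▸
    monotone_nat_of_le_succ (f := (of v).dens) (fun _ => of_den_mono) n.zero_le

theorem dens_pos (v : K) (n : ℕ) : 0 < (of v).dens n :=
  zero_lt_one.trans_le (one_le_dens v n)

variable {v : K} {n : ℕ}

theorem dens_add_dens_le (h : ¬(of v).TerminatedAt (n + 1)) :
    (of v).dens n + (of v).dens (n + 1) ≤ (of v).dens (n + 2) := by
  obtain ⟨gp, hs⟩ := Option.ne_none_iff_exists'.1 h
  rw [dens_recurrence hs rfl rfl, of_partNum_eq_one (partNum_eq_s_a hs)]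
  nlinarith [of_one_le_get?_partDen (partDen_eq_s_b hs), one_le_dens v (n + 1)]

theorem two_le_dens (h : ¬(of v).TerminatedAt (n + 1)) : 2 ≤ (of v).dens (n + 2) := by
  linarith [dens_add_dens_le h, one_le_dens v n, one_le_dens v (n + 1)]

theorem dens_mul_approxErr_succ_sub (h : ¬(of v).TerminatedAt n) :
    (of v).dens n * approxErr v (n + 1) - (of v).dens (n + 1) * approxErr v n =
      (-1) ^ (n + 1) := by
  rw [approxErr, approxErr]
  linear_combination of_determinant h

theorem abs_dens_mul_approxErr_succ_sub (h : ¬(of v).TerminatedAt n) :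
    |(of v).dens n * approxErr v (n + 1) - (of v).dens (n + 1) * approxErr v n| = 1 := by
  rw [dens_mul_approxErr_succ_sub h, abs_pow, abs_neg, abs_one, one_pow]

theorem abs_approxErr_le (h : ¬(of v).TerminatedAt n) :
    |approxErr v n| ≤ 1 / (of v).dens (n + 1) := by
  have hq := dens_pos v n
  have herr : approxErr v n = (of v).dens n * (v - (of v).convs n) := by
    rw [approxErr, conv_eq_num_div_den]; field_simp
  rw [herr, abs_mul, abs_of_pos hq]
  calc _ ≤ (of v).dens n * (1 / ((of v).dens n * (of v).dens (n + 1))) :=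
        mul_le_mul_of_nonneg_left (abs_sub_convs_le h) hq.le
    _ = _ := by field_simp

theorem abs_approxErr_succ_le (h : ¬(of v).TerminatedAt (n + 1)) :
    |approxErr v (n + 1)| ≤ 1 / ((of v).dens n + (of v).dens (n + 1)) :=
  (abs_approxErr_le h).trans <|
    one_div_le_one_div_of_le (add_pos (dens_pos v n) (dens_pos v _)) (dens_add_dens_le h)

theorem abs_dens_mul_approxErr_succ_le (h : ¬(of v).TerminatedAt (n + 1)) :
    |(of v).dens n * approxErr v (n + 1)| ≤
      (of v).dens n / ((of v).dens n + (of v).dens (n + 1)) := by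
  rw [abs_mul, abs_of_pos (dens_pos v n), ← mul_one_div]
  exact mul_le_mul_of_nonneg_left (abs_approxErr_succ_le h) (dens_pos v n).le

theorem abs_dens_succ_mul_approxErr_le_one (h : ¬(of v).TerminatedAt n) :
    |(of v).dens (n + 1) * approxErr v n| ≤ 1 := by
  have hq₁ := dens_pos v (n + 1)
  rw [abs_mul, abs_of_pos hq₁]
  calc _ ≤ (of v).dens (n + 1) * (1 / (of v).dens (n + 1)) :=
        mul_le_mul_of_nonneg_left (abs_approxErr_le h) hq₁.le
    _ = 1 := by field_simp

theorem approxErr_ne_zero (hv : ¬(of v).Terminates) (n : ℕ) : approxErr v n ≠ 0 := by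
  obtain ⟨a, b, ha, hb⟩ := exists_int_eq_nums_dens v n
  have hb0 : (b : K) ≠ 0 := hb ▸ (dens_pos v n).ne'
  intro h0
  refine hv ((terminates_iff_rat v).2 ⟨a / b, ?_⟩)
  rw [approxErr, ha, hb, sub_eq_zero] at h0
  push_cast
  rw [eq_div_iff hb0, mul_comm, h0]

theorem approxErr_mul_approxErr_succ_neg (hv : ¬(of v).Terminates) (n : ℕ) :
    approxErr v n * approxErr v (n + 1) < 0 := by
  have hnt : ∀ k, ¬(of v).TerminatedAt k := fun k h => hv ⟨k, h⟩
  have hA : |(of v).dens n * approxErr v (n + 1)| < 1 :=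
    (abs_dens_mul_approxErr_succ_le (hnt (n + 1))).trans_lt
      ((div_lt_one (add_pos (dens_pos v n) (dens_pos v _))).2 (by linarith [dens_pos v (n + 1)]))
  have hsign := mul_nonpos_of_abs_sub_eq_one hA (abs_dens_succ_mul_approxErr_le_one (hnt n))
    (abs_dens_mul_approxErr_succ_sub (hnt n))
  refine lt_of_le_of_ne ?_ (mul_ne_zero (approxErr_ne_zero hv n) (approxErr_ne_zero hv (n + 1)))
  exact nonpos_of_mul_nonpos_left (by linear_combination hsign)
    (mul_pos (dens_pos v n) (dens_pos v (n + 1)))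

theorem one_div_add_le_abs_approxErr (h : ¬(of v).TerminatedAt (n + 1)) :
    1 / ((of v).dens n + (of v).dens (n + 1)) ≤ |approxErr v n| := by
  have h₁ := abs_dens_mul_approxErr_succ_le h
  have h₂ := (abs_dens_mul_approxErr_succ_sub (mt (terminated_stable n.le_succ) h)).symm.trans_le
    (abs_sub _ _)
  have hq₀ := dens_pos v n
  have hq₁ := dens_pos v (n + 1)
  set q₀ := (of v).dens n
  set q₁ := (of v).dens (n + 1)
  calc 1 / (q₀ + q₁) = (1 - q₀ / (q₀ + q₁)) / q₁ := by field_simp; ring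
    _ ≤ |q₁ * approxErr v n| / q₁ := by gcongr; linarith
    _ = |approxErr v n| := by rw [abs_mul, abs_of_pos hq₁]; field_simp

theorem one_div_two_mul_dens_le_abs_mul_sub (hv : ¬(of v).Terminates) (n : ℕ)
    {m p : ℤ} (hm : m ≠ 0) (hmd : |(m : K)| < (of v).dens (n + 1)) :
    1 / (2 * (of v).dens (n + 1)) ≤ |m * v - p| := by
  have hnt : ∀ k, ¬(of v).TerminatedAt k := fun k h => hv ⟨k, h⟩
  have hsign := approxErr_mul_approxErr_succ_neg hv n
  have hlow := one_div_add_le_abs_approxErr (hnt (n + 1))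
  have hdet := of_determinant (hnt n)
  have hq₀ := one_le_dens v n
  have hmono : (of v).dens n ≤ (of v).dens (n + 1) := of_den_mono
  obtain ⟨a, b, ha, hb⟩ := exists_int_eq_nums_dens v n
  obtain ⟨c, d, hc, hd⟩ := exists_int_eq_nums_dens v (n + 1)
  simp only [approxErr, ha, hb, hc, hd] at hsign hlow hdet hq₀ hmono hmd ⊢
  have hunit : IsUnit (a * d - b * c) := by
    rw [show a * d - b * c = (-1) ^ (n + 1) by exact_mod_cast hdet]
    exact isUnit_neg_one.pow _
  calc 1 / (2 * (d : K)) ≤ 1 / (b + d) := one_div_le_one_div_of_le (by linarith) (by linarith)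
    _ ≤ |b * v - a| := hlow
    _ ≤ |m * v - p| := abs_le_abs_mul_sub_of_isUnit v hunit
        (by exact_mod_cast zero_le_one.trans hq₀) hm (by exact_mod_cast hmd) hsign.le

end GenContFract

theorem sum_inv_le_harmonic_div_of_separated {ι : Type*} {s : Finset ι} {y : ι → ℝ} {δ : ℝ}
    {N : ℕ} (hδ : 0 < δ) (hy : ∀ i ∈ s, δ ≤ y i ∧ y i < (N + 1) * δ)
    (hsep : (s : Set ι).Pairwise fun i j => δ ≤ |y i - y j|) :
    ∑ i ∈ s, (y i)⁻¹ ≤ harmonic N / δ := by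
  set F : ι → ℕ := fun i => ⌊y i / δ⌋₊
  have hFy : ∀ i ∈ s, (F i : ℝ) ≤ y i / δ ∧ y i / δ < F i + 1 := fun i hi =>
    ⟨Nat.floor_le (div_nonneg (hδ.le.trans (hy i hi).1) hδ.le), Nat.lt_floor_add_one _⟩
  have hF : ∀ i ∈ s, F i ∈ Icc 1 N ∧ (y i)⁻¹ ≤ (F i * δ)⁻¹ := by
    intro i hi
    obtain ⟨hlow, hhigh⟩ := hy i hi
    have h1 : 1 ≤ y i / δ := (one_le_div hδ).2 hlow
    have h2 : y i / δ < N + 1 := (div_lt_iff₀ hδ).2 hhigh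
    have hF1 : 1 ≤ F i := Nat.le_floor (by simpa using h1)
    have hFN : F i < N + 1 := (Nat.floor_lt' (by omega)).2 (by simpa using h2)
    refine ⟨mem_Icc.2 ⟨hF1, Nat.lt_add_one_iff.1 hFN⟩, ?_⟩
    exact inv_anti₀ (by positivity) ((le_div_iff₀ hδ).1 (hFy i hi).1)
  have hinj : Set.InjOn F s := by
    intro i hi j hj hij
    by_contra hne
    have h : |y i / δ - y j / δ| < 1 := by
      have := hFy i hi; have := hFy j hj
      rw [abs_sub_lt_iff]; constructor <;> push_cast [hij] at * <;> linarith
    rw [← sub_div, abs_div, abs_of_pos hδ, div_lt_one hδ] at h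
    exact (hsep hi hj hne).not_gt h
  calc ∑ i ∈ s, (y i)⁻¹ ≤ ∑ i ∈ s, ((F i : ℝ) * δ)⁻¹ := sum_le_sum fun i hi => (hF i hi).2
    _ = ∑ m ∈ s.image F, ((m : ℝ) * δ)⁻¹ :=
      (sum_image (f := fun m : ℕ => ((m : ℝ) * δ)⁻¹) hinj).symm
    _ ≤ ∑ m ∈ Icc 1 N, ((m : ℝ) * δ)⁻¹ :=
      sum_le_sum_of_subset_of_nonneg (image_subset_iff.2 fun i hi => (hF i hi).1)
        fun _ _ _ => by positivity
    _ = harmonic N / δ := by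
      simp only [mul_inv, ← sum_mul, harmonic_eq_sum_Icc, div_eq_mul_inv]; push_cast; rfl

theorem sum_inv_abs_le_two_mul_harmonic_div_of_separated {ι : Type*} {s : Finset ι}
    {x : ι → ℝ} {δ : ℝ} {N : ℕ} (hδ : 0 < δ) (hx : ∀ i ∈ s, δ ≤ |x i| ∧ |x i| < (N + 1) * δ)
    (hsep : (s : Set ι).Pairwise fun i j => δ ≤ |x i - x j|) :
    ∑ i ∈ s, |x i|⁻¹ ≤ 2 * harmonic N / δ := by
  have hpart : ∀ p : ι → Prop, [DecidablePred p] →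
      (∀ i j, p i → p j → |x i - x j| = |(|x i| - |x j|)|) →
      ∑ i ∈ s.filter p, |x i|⁻¹ ≤ harmonic N / δ := fun p _ hp =>
    sum_inv_le_harmonic_div_of_separated hδ (fun i hi => hx i (mem_filter.1 hi).1)
      fun i hi j hj hij => by
        obtain ⟨hi, hpi⟩ := mem_filter.1 hi
        obtain ⟨hj, hpj⟩ := mem_filter.1 hj
        exact hp i j hpi hpj ▸ hsep hi hj hij
  have h₁ := hpart (fun i => 0 ≤ x i) fun i j hi hj => by
    rw [abs_of_nonneg hi, abs_of_nonneg hj]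
  have h₂ := hpart (fun i => ¬ 0 ≤ x i) fun i j hi hj => by
    rw [abs_of_neg (not_le.1 hi), abs_of_neg (not_le.1 hj), ← abs_neg]; ring_nf
  rw [← sum_filter_add_sum_filter_not s (fun i => 0 ≤ x i), mul_div_assoc]
  linarith

theorem sum_inv_nint_mul_le_of_same_sign {α : ℝ} {Q : ℕ} (hQ : 0 < Q)
    (hsep : ∀ m : ℤ, m ≠ 0 → |m| < Q → 1 / (2 * Q) ≤ nint (m * α)) {s : Finset ℤ}
    (hs : s ⊆ (Ioo (-Q : ℤ) Q).erase 0) (hsign : ∀ i ∈ s, ∀ j ∈ s, (0 < i ↔ 0 < j)) :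
    ∑ i ∈ s, (nint (i * α))⁻¹ ≤ 4 * Q * harmonic Q := by
  have hmem : ∀ i ∈ s, i ≠ 0 ∧ -(Q : ℤ) < i ∧ i < Q := fun i hi => by
    simpa only [mem_erase, mem_Ioo] using hs hi
  refine (sum_inv_abs_le_two_mul_harmonic_div_of_separated
      (x := fun i : ℤ => i * α - round (i * α)) (N := Q) (by positivity)
      (fun i hi => ⟨hsep i (hmem i hi).1 (abs_lt.2 (hmem i hi).2), ?_⟩)
      fun i hi j hj hij => ?_).trans_eq ?_
  · calc |(i : ℝ) * α - round (i * α)| ≤ 1 / 2 := abs_sub_round _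
      _ < (Q + 1) * (1 / (2 * Q)) := by field_simp; linarith
  · have hij' : |i - j| < Q := by
      have := hsign i hi j hj; have := hmem i hi; have := hmem j hj
      rw [abs_lt]; omega
    calc 1 / (2 * (Q : ℝ)) ≤ nint ((i - j : ℤ) * α) := hsep _ (sub_ne_zero.2 hij) hij'
      _ ≤ |((i - j : ℤ) : ℝ) * α - (round (i * α) - round (j * α) : ℤ)| := round_le _ _
      _ = _ := by push_cast; ring_nf
  · field_simp; ring

theorem sum_inv_nint_mul_le_of_separated {α : ℝ} {Q : ℕ} (hQ : 0 < Q)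
    (hsep : ∀ m : ℤ, m ≠ 0 → |m| < Q → 1 / (2 * Q) ≤ nint (m * α)) :
    ∑ i ∈ (Ioo (-Q : ℤ) Q).erase 0, (nint (i * α))⁻¹ ≤ 8 * Q * harmonic Q := by
  rw [← sum_filter_add_sum_filter_not _ (0 < ·)]
  have h₁ := sum_inv_nint_mul_le_of_same_sign hQ hsep (filter_subset (0 < ·) _)
    fun i hi j hj => by simp only [mem_filter] at hi hj; tauto
  have h₂ := sum_inv_nint_mul_le_of_same_sign hQ hsep (filter_subset (¬ 0 < ·) _)
    fun i hi j hj => by simp only [mem_filter] at hi hj; tauto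
  linarith

theorem harmonic_le_two_mul_log_add_one {N : ℕ} (hN : 2 ≤ N) :
    (harmonic N : ℝ) ≤ 2 * Real.log (N + 1) := by
  have hN' : (2 : ℝ) ≤ N := by exact_mod_cast hN
  have h₁ : Real.log N ≤ Real.log (N + 1) := Real.log_le_log (by positivity) (by linarith)
  have h₂ : 1 ≤ Real.log (N + 1) := by
    rw [Real.le_log_iff_exp_le (by positivity)]
    linarith [Real.exp_one_lt_d9]
  linarith [harmonic_le_one_add_log N]

/-- there is an absolute constant `C > 0` such that for every irrational
`α` with convergent denominators `q` and every `k ≥ 2`,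
`∑_{0<|q|<q_k} 1/‖qα‖ ≤ C·q_k·log(q_k + 1)`. -/
theorem sum_inv_nint_upper_bound :
    ∃ C : ℝ, 0 < C ∧ ∀ (α : ℝ), Irrational α →
      ∀ (q : ℕ → ℕ), (∀ n, (q n : ℝ) = (GenContFract.of α).dens n) →
      ∀ k : ℕ, 2 ≤ k →
      ∑ i ∈ (Finset.Ioo (-(q k : ℤ)) (q k : ℤ)).erase 0, 1 / nint ((i : ℝ) * α)
        ≤ C * (q k : ℝ) * Real.log ((q k : ℝ) + 1) := by
  refine ⟨16, by norm_num, fun α hα q hq k hk => ?_⟩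
  have hv : ¬(GenContFract.of α).Terminates := fun h =>
    let ⟨r, hr⟩ := (GenContFract.terminates_iff_rat α).1 h
    hα ⟨r, hr.symm⟩
  obtain ⟨n, rfl⟩ : ∃ n, k = n + 2 := ⟨k - 2, by omega⟩
  have hQ : 2 ≤ q (n + 2) := by
    exact_mod_cast hq (n + 2) ▸ GenContFract.two_le_dens (v := α) fun h => hv ⟨_, h⟩
  have hsep : ∀ m : ℤ, m ≠ 0 → |m| < q (n + 2) → 1 / (2 * q (n + 2)) ≤ nint (m * α) :=
    fun m hm hmQ => hq (n + 2) ▸ GenContFract.one_div_two_mul_dens_le_abs_mul_sub hv (n + 1) hm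
      (hq (n + 2) ▸ by exact_mod_cast hmQ)
  calc _ = ∑ i ∈ (Ioo (-(q (n + 2) : ℤ)) (q (n + 2))).erase 0, (nint (i * α))⁻¹ := by
        simp only [one_div]
    _ ≤ 8 * q (n + 2) * (harmonic (q (n + 2)) : ℝ) :=
        sum_inv_nint_mul_le_of_separated (by omega) hsep
    _ ≤ 8 * q (n + 2) * (2 * Real.log (q (n + 2) + 1)) := by
        gcongr; exact harmonic_le_two_mul_log_add_one hQ
    _ = _ := by ring
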